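/- Let d ≥ 2 and define υ(x) = min(1, |x'|^{-d}, |x_d - |x'|^2|^{-d}) and υ_*(x) = min(1, |x'|^{-d}, |x_d + |x'|^2|^{-d}) on ℝ^d. Then there exists C_d < ∞ such that T(υ_*)(x) ≤ C_d · υ(x)^{1/d} for all x ∈ ℝ^d, where Tf(x) = ∫_{ℝ^{d-1}} f(x'-t, x_d - |t|^2) dt. -/

import Mathlib

/-!
After the substitution `t = x' + s`, `T(υ_*)(x)` becomes
`∫ min(1, |s|^{-d}, |c + ⟨v, s⟩|^{-d}) ds` with `c = x_d - |x'|²` and `v = -2x'`.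
Rotate `v` onto the first coordinate axis and integrate out the other `d - 2` coordinates:
by scaling, `∫ max(P, |w|)^{-d} dw` over `ℝ^{d-2}` is a constant times `P^{-2}`, which leaves
`∫ max(1, |σ|, |c + aσ|)^{-2} dσ` with `a = |v|`. This one-dimensional integral is at most a
constant times each of `1`, `1/a` and `1/|c|` (for the last, split according to whether
`|c + aσ|` or `a|σ|` is at least `|c|/2`), hence `≲ 1/max(1, |x'|, |c|) = υ(x)^{1/d}`.
-/

open MeasureTheory

/-- Points of ℝ^d written as `(x', x_d) ∈ ℝ^{d-1} × ℝ`. -/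
abbrev Pt (d : ℕ) := EuclideanSpace ℝ (Fin (d - 1)) × ℝ

/-- The convolution operator `Tf(x) = ∫_{ℝ^{d-1}} f(x'-t, x_d - |t|²) dt`
acting on nonnegative measurable functions. -/
noncomputable def Tlin (d : ℕ) (f : Pt d → ENNReal) (x : Pt d) : ENNReal :=
  ∫⁻ t : EuclideanSpace ℝ (Fin (d - 1)), f (x.1 - t, x.2 - ‖t‖ ^ 2)

/-- `υ(x) = min(1, |x'|^{-d}, |x_d - |x'|²|^{-d}) = (max(1, |x'|^d, |x_d - |x'|²|^d))⁻¹`. -/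
noncomputable def ups (d : ℕ) (x : Pt d) : ENNReal :=
  ENNReal.ofReal ((max 1 (max (‖x.1‖ ^ d) (|x.2 - ‖x.1‖ ^ 2| ^ d)))⁻¹)

/-- `υ_*(x) = min(1, |x'|^{-d}, |x_d + |x'|²|^{-d}) = (max(1, |x'|^d, |x_d + |x'|²|^d))⁻¹`. -/
noncomputable def upsStar (d : ℕ) (x : Pt d) : ENNReal :=
  ENNReal.ofReal ((max 1 (max (‖x.1‖ ^ d) (|x.2 + ‖x.1‖ ^ 2| ^ d)))⁻¹)

open Module
open scoped ENNReal RealInnerProductSpace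

theorem ofReal_inv_pow_anti (k : ℕ) {P Q : ℝ} (hP : 0 < P) (h : P ≤ Q) :
    ENNReal.ofReal ((Q ^ k)⁻¹) ≤ ENNReal.ofReal ((P ^ k)⁻¹) :=
  ENNReal.ofReal_le_ofReal (inv_anti₀ (by positivity) (pow_le_pow_left₀ hP.le h k))

theorem max_one_max_pow {a b : ℝ} (ha : 0 ≤ a) (hb : 0 ≤ b) (k : ℕ) :
    max 1 (max (a ^ k) (b ^ k)) = max 1 (max a b) ^ k := by
  have hmono := pow_left_monotoneOn (M₀ := ℝ) (n := k)
  rw [← hmono.map_max ha hb, ← one_pow k, ← hmono.map_max (by norm_num) (le_max_of_le_left ha),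
    one_pow]

noncomputable def tailIntegral {E : Type*} [Norm E] [MeasurableSpace E] (μ : Measure E) (k : ℕ) :
    ℝ≥0∞ :=
  ∫⁻ x, ENNReal.ofReal ((max 1 ‖x‖ ^ k)⁻¹) ∂μ

section AddHaar

variable {E : Type*} [NormedAddCommGroup E] [NormedSpace ℝ E] [FiniteDimensional ℝ E]
  [MeasurableSpace E] [BorelSpace E] (μ : Measure E) [μ.IsAddHaarMeasure]

theorem lintegral_comp_smul_of_pos (f : E → ℝ≥0∞) {r : ℝ} (hr : 0 < r) :
    ∫⁻ x, f (r • x) ∂μ = ENNReal.ofReal ((r ^ finrank ℝ E)⁻¹) * ∫⁻ x, f x ∂μ := by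
  calc ∫⁻ x, f (r • x) ∂μ = ∫⁻ x, f x ∂(Measure.map (r • ·) μ) :=
        (lintegral_map_equiv f (Homeomorph.smulOfNeZero r hr.ne').toMeasurableEquiv).symm
    _ = _ := by
        rw [Measure.map_addHaar_smul μ hr.ne', lintegral_smul_measure, abs_of_pos (by positivity)]
        rfl

theorem lintegral_comp_add_smul_of_pos (f : E → ℝ≥0∞) (c : E) {r : ℝ} (hr : 0 < r) :
    ∫⁻ x, f (c + r • x) ∂μ = ENNReal.ofReal ((r ^ finrank ℝ E)⁻¹) * ∫⁻ x, f x ∂μ := by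
  rw [lintegral_comp_smul_of_pos μ (fun x ↦ f (c + x)) hr, lintegral_add_left_eq_self]

theorem tailIntegral_lt_top {k : ℕ} (hk : finrank ℝ E < k) : tailIntegral μ k < ∞ := by
  have hbound : ∀ x : E, ENNReal.ofReal ((max 1 ‖x‖ ^ k)⁻¹) ≤
      ENNReal.ofReal (2 ^ k) * ENNReal.ofReal ((1 + ‖x‖) ^ (-(k : ℝ))) := by
    intro x
    have h : (1 + ‖x‖) / 2 ≤ max 1 ‖x‖ := by
      linarith [le_max_left 1 ‖x‖, le_max_right 1 ‖x‖]
    rw [← ENNReal.ofReal_mul (by positivity), Real.rpow_neg (by positivity), Real.rpow_natCast,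
      show (2 : ℝ) ^ k * ((1 + ‖x‖) ^ k)⁻¹ = (((1 + ‖x‖) / 2) ^ k)⁻¹ by rw [div_pow]; field_simp]
    exact ofReal_inv_pow_anti k (by positivity) h
  calc tailIntegral μ k
      ≤ ∫⁻ x, ENNReal.ofReal (2 ^ k) * ENNReal.ofReal ((1 + ‖x‖) ^ (-(k : ℝ))) ∂μ :=
        lintegral_mono hbound
    _ = ENNReal.ofReal (2 ^ k) * ∫⁻ x, ENNReal.ofReal ((1 + ‖x‖) ^ (-(k : ℝ))) ∂μ :=
        lintegral_const_mul' _ _ ENNReal.ofReal_ne_top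
    _ < ∞ := ENNReal.mul_lt_top ENNReal.ofReal_lt_top
        (finite_integral_one_add_norm (by exact_mod_cast hk))

theorem lintegral_inv_max_pow_norm {k : ℕ} (hk : finrank ℝ E ≤ k) {P : ℝ} (hP : 0 < P) :
    ∫⁻ x, ENNReal.ofReal ((max P ‖x‖ ^ k)⁻¹) ∂μ =
      tailIntegral μ k * ENNReal.ofReal ((P ^ (k - finrank ℝ E))⁻¹) := by
  have hscale := lintegral_comp_smul_of_pos μ (fun x ↦ ENNReal.ofReal ((max P ‖x‖ ^ k)⁻¹)) hP
  have hpt : ∀ x : E, ENNReal.ofReal ((max P ‖P • x‖ ^ k)⁻¹) =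
      ENNReal.ofReal ((P ^ k)⁻¹) * ENNReal.ofReal ((max 1 ‖x‖ ^ k)⁻¹) := by
    intro x
    rw [norm_smul, Real.norm_of_nonneg hP.le, ← ENNReal.ofReal_mul (by positivity), ← mul_inv,
      ← mul_pow, mul_max_of_nonneg _ _ hP.le, mul_one]
  simp only [hpt] at hscale
  rw [lintegral_const_mul' _ _ ENNReal.ofReal_ne_top] at hscale
  have hPn : (0 : ℝ) < P ^ finrank ℝ E := by positivity
  calc ∫⁻ x, ENNReal.ofReal ((max P ‖x‖ ^ k)⁻¹) ∂μ
      = ENNReal.ofReal (P ^ finrank ℝ E) * (ENNReal.ofReal ((P ^ finrank ℝ E)⁻¹) *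
          ∫⁻ x, ENNReal.ofReal ((max P ‖x‖ ^ k)⁻¹) ∂μ) := by
        rw [← mul_assoc, ← ENNReal.ofReal_mul hPn.le, mul_inv_cancel₀ hPn.ne', ENNReal.ofReal_one,
          one_mul]
    _ = ENNReal.ofReal (P ^ finrank ℝ E * (P ^ k)⁻¹) * tailIntegral μ k := by
        rw [← hscale, ← mul_assoc, ENNReal.ofReal_mul hPn.le, tailIntegral]
    _ = _ := by
        rw [mul_comm, ← pow_sub_mul_pow P hk]
        field_simp

end AddHaar

section OneDimensional

local notation "K₁" => tailIntegral (volume : Measure ℝ) 2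

theorem lintegral_inv_max_sq_norm {Q : ℝ} (hQ : 0 < Q) :
    ∫⁻ u : ℝ, ENNReal.ofReal ((max Q ‖u‖ ^ 2)⁻¹) = K₁ * ENNReal.ofReal Q⁻¹ := by
  rw [lintegral_inv_max_pow_norm _ (k := 2) (by simp) hQ, finrank_self]
  norm_num

theorem lintegral_inv_max_sq_norm_affine {Q a : ℝ} (hQ : 0 < Q) (ha : 0 < a) (c : ℝ) :
    ∫⁻ σ : ℝ, ENNReal.ofReal ((max Q ‖c + a * σ‖ ^ 2)⁻¹) =
      ENNReal.ofReal a⁻¹ * (K₁ * ENNReal.ofReal Q⁻¹) := by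
  have h := lintegral_comp_add_smul_of_pos volume
    (fun u : ℝ ↦ ENNReal.ofReal ((max Q ‖u‖ ^ 2)⁻¹)) c ha
  simp only [smul_eq_mul, finrank_self, pow_one] at h
  rw [h, lintegral_inv_max_sq_norm hQ]

theorem lintegral_inv_max_affine_sq_le_inv_norm {a c : ℝ} (ha : 0 < a) (hc : 0 < ‖c‖) :
    ∫⁻ σ : ℝ, ENNReal.ofReal ((max 1 (max ‖σ‖ ‖c + a * σ‖) ^ 2)⁻¹) ≤
      4 * K₁ * ENNReal.ofReal ‖c‖⁻¹ := by
  have hsplit : ∀ σ : ℝ, ENNReal.ofReal ((max 1 (max ‖σ‖ ‖c + a * σ‖) ^ 2)⁻¹) ≤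
      ENNReal.ofReal ((max (‖c‖ / 2) ‖σ‖ ^ 2)⁻¹) +
        ENNReal.ofReal ((max (‖c‖ / (2 * a)) ‖c + a * σ‖ ^ 2)⁻¹) := by
    intro σ
    by_cases hσ : ‖c‖ / 2 ≤ ‖c + a * σ‖
    · refine le_add_right (ofReal_inv_pow_anti 2 (by positivity) ?_)
      exact max_le (le_max_of_le_right (le_max_of_le_right hσ))
        (le_max_of_le_right (le_max_left _ _))
    · refine le_add_left (ofReal_inv_pow_anti 2 (by positivity) ?_)
      have htri : ‖c‖ ≤ ‖c + a * σ‖ + a * ‖σ‖ := by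
        simpa [norm_mul, abs_of_pos ha] using norm_le_add_norm_add c (a * σ)
      have hσ' : ‖c‖ / (2 * a) ≤ ‖σ‖ := by
        rw [div_le_iff₀ (by positivity)]; linarith
      exact max_le (le_max_of_le_right (le_max_of_le_left hσ'))
        (le_max_of_le_right (le_max_right _ _))
  calc ∫⁻ σ : ℝ, ENNReal.ofReal ((max 1 (max ‖σ‖ ‖c + a * σ‖) ^ 2)⁻¹)
      ≤ ∫⁻ σ : ℝ, (ENNReal.ofReal ((max (‖c‖ / 2) ‖σ‖ ^ 2)⁻¹) +
          ENNReal.ofReal ((max (‖c‖ / (2 * a)) ‖c + a * σ‖ ^ 2)⁻¹)) := lintegral_mono hsplit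
    _ = K₁ * ENNReal.ofReal (‖c‖ / 2)⁻¹ +
          ENNReal.ofReal a⁻¹ * (K₁ * ENNReal.ofReal (‖c‖ / (2 * a))⁻¹) := by
        rw [lintegral_add_left (by fun_prop), lintegral_inv_max_sq_norm (by positivity),
          lintegral_inv_max_sq_norm_affine (by positivity) ha]
    _ = 4 * K₁ * ENNReal.ofReal ‖c‖⁻¹ := by
        rw [mul_left_comm, ← mul_add, ← ENNReal.ofReal_mul (by positivity),
          ← ENNReal.ofReal_add (by positivity) (by positivity), mul_comm 4 K₁, mul_assoc,
          ← ENNReal.ofReal_ofNat, ← ENNReal.ofReal_mul (by norm_num)]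
        congr 2
        field_simp
        ring

theorem lintegral_inv_max_affine_sq_le {a : ℝ} (ha : 0 ≤ a) (c : ℝ) :
    ∫⁻ σ : ℝ, ENNReal.ofReal ((max 1 (max ‖σ‖ ‖c + a * σ‖) ^ 2)⁻¹) ≤
      4 * K₁ * ENNReal.ofReal ((max 1 (max a ‖c‖))⁻¹) := by
  have hK : K₁ ≤ 4 * K₁ := le_mul_of_one_le_left zero_le (by norm_num)
  rcases ha.eq_or_lt with rfl | ha
  · have hF : ∀ σ : ℝ, max 1 (max ‖σ‖ ‖c + 0 * σ‖) = max (max 1 ‖c‖) ‖σ‖ := fun σ ↦ by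
      rw [zero_mul, add_zero, max_comm ‖σ‖, max_assoc]
    simp_rw [hF, lintegral_inv_max_sq_norm (lt_max_of_lt_left one_pos),
      max_eq_right (norm_nonneg c)]
    gcongr
  rcases max_choice 1 (max a ‖c‖) with hM | hM <;> rw [hM]
  · calc ∫⁻ σ : ℝ, ENNReal.ofReal ((max 1 (max ‖σ‖ ‖c + a * σ‖) ^ 2)⁻¹)
        ≤ ∫⁻ σ : ℝ, ENNReal.ofReal ((max 1 ‖σ‖ ^ 2)⁻¹) :=
          lintegral_mono fun σ ↦ ofReal_inv_pow_anti 2 (lt_max_of_lt_left one_pos)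
            (max_le_max le_rfl (le_max_left _ _))
      _ ≤ 4 * K₁ * ENNReal.ofReal 1⁻¹ := by rw [lintegral_inv_max_sq_norm one_pos]; gcongr
  rcases max_choice a ‖c‖ with hM' | hM' <;> rw [hM']
  · calc ∫⁻ σ : ℝ, ENNReal.ofReal ((max 1 (max ‖σ‖ ‖c + a * σ‖) ^ 2)⁻¹)
        ≤ ∫⁻ σ : ℝ, ENNReal.ofReal ((max 1 ‖c + a * σ‖ ^ 2)⁻¹) :=
          lintegral_mono fun σ ↦ ofReal_inv_pow_anti 2 (lt_max_of_lt_left one_pos)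
            (max_le_max le_rfl (le_max_right _ _))
      _ ≤ 4 * K₁ * ENNReal.ofReal a⁻¹ := by
          rw [lintegral_inv_max_sq_norm_affine one_pos ha, inv_one, ENNReal.ofReal_one, mul_one,
            mul_comm]
          gcongr
  exact lintegral_inv_max_affine_sq_le_inv_norm ha
    (one_pos.trans_le (hM' ▸ hM ▸ le_max_left _ _))

end OneDimensional

theorem lintegral_euclideanSpace_fin_succ {m : ℕ} {f : EuclideanSpace ℝ (Fin (m + 1)) → ℝ≥0∞}
    (hf : Measurable f) :
    ∫⁻ y, f y = ∫⁻ σ : ℝ, ∫⁻ w : Fin m → ℝ, f (WithLp.toLp 2 (Fin.cons σ w)) := by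
  have hΦ : MeasurePreserving
      ((MeasurableEquiv.toLp 2 (Fin (m + 1) → ℝ)) ∘
        (MeasurableEquiv.piFinSuccAbove (fun _ : Fin (m + 1) ↦ ℝ) 0).symm) volume volume :=
    (EuclideanSpace.volume_preserving_symm_measurableEquiv_toLp (Fin (m + 1))).symm.comp
      (volume_preserving_piFinSuccAbove (fun _ : Fin (m + 1) ↦ ℝ) 0).symm
  rw [← hΦ.lintegral_comp hf, Measure.volume_eq_prod]
  refine (lintegral_prod _ (hf.comp hΦ.measurable).aemeasurable).trans ?_
  simp only [Function.comp_apply, MeasurableEquiv.piFinSuccAbove_symm_apply,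
    Fin.insertNthEquiv_zero, MeasurableEquiv.toLp_apply]
  rfl

theorem norm_le_norm_toLp_cons {m : ℕ} (σ : ℝ) (w : Fin m → ℝ) :
    ‖σ‖ ≤ ‖WithLp.toLp 2 (Fin.cons σ w : Fin (m + 1) → ℝ)‖ ∧
      ‖w‖ ≤ ‖WithLp.toLp 2 (Fin.cons σ w : Fin (m + 1) → ℝ)‖ := by
  refine ⟨PiLp.norm_apply_le (WithLp.toLp 2 (Fin.cons σ w : Fin (m + 1) → ℝ)) 0, ?_⟩
  exact (pi_norm_le_iff_of_nonneg (norm_nonneg _)).2 fun j ↦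
    PiLp.norm_apply_le (WithLp.toLp 2 (Fin.cons σ w : Fin (m + 1) → ℝ)) j.succ

theorem exists_linearIsometryEquiv_inner_eq {m : ℕ} (v : EuclideanSpace ℝ (Fin (m + 1))) :
    ∃ R : EuclideanSpace ℝ (Fin (m + 1)) ≃ₗᵢ[ℝ] EuclideanSpace ℝ (Fin (m + 1)),
      ∀ y, ⟪v, R y⟫ = ‖v‖ * y 0 := by
  rcases eq_or_ne v 0 with rfl | hv
  · exact ⟨LinearIsometryEquiv.refl ℝ _, fun y ↦ by simp⟩
  set e := ‖v‖⁻¹ • v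
  set e₀ : EuclideanSpace ℝ (Fin (m + 1)) := EuclideanSpace.single 0 1
  have hnorm : ‖e‖ = ‖e₀‖ := by
    rw [PiLp.norm_single, norm_one, norm_smul, norm_inv, norm_norm,
      inv_mul_cancel₀ (norm_ne_zero_iff.2 hv)]
  set R₀ := (ℝ ∙ (e - e₀))ᗮ.reflection
  refine ⟨R₀.symm, fun y ↦ ?_⟩
  have hRv : R₀ v = ‖v‖ • e₀ := by
    rw [← Submodule.reflection_sub hnorm, ← map_smul, smul_smul,
      mul_inv_cancel₀ (norm_ne_zero_iff.2 hv), one_smul]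
  rw [← LinearIsometryEquiv.inner_map_eq_flip, hRv, real_inner_smul_left,
    EuclideanSpace.inner_single_left]
  simp

theorem lintegral_inv_max_norm_inner_pow_le_iterated {m : ℕ} (k : ℕ)
    (v : EuclideanSpace ℝ (Fin (m + 1))) (c : ℝ) :
    ∫⁻ s, ENNReal.ofReal ((max 1 (max ‖s‖ ‖c + ⟪v, s⟫‖) ^ k)⁻¹) ≤
      ∫⁻ σ : ℝ, ∫⁻ w : Fin m → ℝ,
        ENNReal.ofReal ((max (max 1 (max ‖σ‖ ‖c + ‖v‖ * σ‖)) ‖w‖ ^ k)⁻¹) := by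
  obtain ⟨R, hR⟩ := exists_linearIsometryEquiv_inner_eq v
  set F := fun s ↦ ENNReal.ofReal ((max 1 (max ‖s‖ ‖c + ⟪v, s⟫‖) ^ k)⁻¹)
  have hpt : ∀ σ w, F (R (WithLp.toLp 2 (Fin.cons σ w))) ≤
      ENNReal.ofReal ((max (max 1 (max ‖σ‖ ‖c + ‖v‖ * σ‖)) ‖w‖ ^ k)⁻¹) := by
    intro σ w
    obtain ⟨hσ, hw⟩ := norm_le_norm_toLp_cons σ w
    refine ofReal_inv_pow_anti k (lt_max_of_lt_left (lt_max_of_lt_left one_pos)) ?_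
    simp only [hR, R.norm_map, Fin.cons_zero]
    exact max_le (max_le_max le_rfl (max_le_max hσ le_rfl))
      (le_max_of_le_right (le_max_of_le_left hw))
  calc ∫⁻ s, F s = ∫⁻ y, F (R y) :=
        (R.measurePreserving.lintegral_comp_emb R.toMeasurableEquiv.measurableEmbedding _).symm
    _ = ∫⁻ σ, ∫⁻ w, F (R (WithLp.toLp 2 (Fin.cons σ w))) :=
        lintegral_euclideanSpace_fin_succ (by fun_prop)
    _ ≤ _ := lintegral_mono fun σ ↦ lintegral_mono fun w ↦ hpt σ w

theorem exists_lintegral_inv_max_norm_inner_pow_le {m k : ℕ} (hk : m + 2 ≤ k) :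
    ∃ C < ∞, ∀ (v : EuclideanSpace ℝ (Fin (m + 1))) (c : ℝ),
      ∫⁻ s, ENNReal.ofReal ((max 1 (max ‖s‖ ‖c + ⟪v, s⟫‖) ^ k)⁻¹) ≤
        C * ENNReal.ofReal ((max 1 (max ‖v‖ ‖c‖))⁻¹) := by
  set K := tailIntegral (volume : Measure (Fin m → ℝ)) k
  set C₁ := 4 * tailIntegral (volume : Measure ℝ) 2
  have hK : K < ∞ := tailIntegral_lt_top _ (by simp only [finrank_fin_fun]; omega)
  have hC₁ : C₁ < ∞ := ENNReal.mul_lt_top (by simp) (tailIntegral_lt_top _ (by simp))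
  have htail : ∀ P : ℝ, 0 < P → ∫⁻ w : Fin m → ℝ, ENNReal.ofReal ((max P ‖w‖ ^ k)⁻¹) =
      K * ENNReal.ofReal ((P ^ (k - m))⁻¹) := fun P hP ↦ by
    rw [lintegral_inv_max_pow_norm _ (by rw [finrank_fin_fun]; omega) hP, finrank_fin_fun]
  refine ⟨K * C₁, ENNReal.mul_lt_top hK hC₁, fun v c ↦ ?_⟩
  set P : ℝ → ℝ := fun σ ↦ max 1 (max ‖σ‖ ‖c + ‖v‖ * σ‖)
  have hP : ∀ σ, 1 ≤ P σ := fun σ ↦ le_max_left _ _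
  calc ∫⁻ s, ENNReal.ofReal ((max 1 (max ‖s‖ ‖c + ⟪v, s⟫‖) ^ k)⁻¹)
      ≤ ∫⁻ σ, ∫⁻ w : Fin m → ℝ, ENNReal.ofReal ((max (P σ) ‖w‖ ^ k)⁻¹) :=
        lintegral_inv_max_norm_inner_pow_le_iterated k v c
    _ = ∫⁻ σ, K * ENNReal.ofReal ((P σ ^ (k - m))⁻¹) := by
        simp only [htail _ (zero_lt_one.trans_le (hP _))]
    _ ≤ ∫⁻ σ, K * ENNReal.ofReal ((P σ ^ 2)⁻¹) := by
        refine lintegral_mono fun σ ↦ ?_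
        gcongr
        exacts [hP σ, by omega]
    _ = K * ∫⁻ σ, ENNReal.ofReal ((P σ ^ 2)⁻¹) := lintegral_const_mul' _ _ hK.ne
    _ ≤ K * (C₁ * ENNReal.ofReal ((max 1 (max ‖v‖ ‖c‖))⁻¹)) := by
        gcongr; exact lintegral_inv_max_affine_sq_le (norm_nonneg v) c
    _ = _ := (mul_assoc _ _ _).symm

theorem ups_rpow_one_div {d : ℕ} (hd : d ≠ 0) (x : Pt d) :
    ups d x ^ ((1 : ℝ) / d) = ENNReal.ofReal ((max 1 (max ‖x.1‖ ‖x.2 - ‖x.1‖ ^ 2‖))⁻¹) := by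
  rw [ups, ← Real.norm_eq_abs, max_one_max_pow (norm_nonneg _) (norm_nonneg _), ← inv_pow,
    ENNReal.ofReal_pow (by positivity), one_div, ENNReal.pow_rpow_inv_natCast hd]

theorem Tlin_upsStar_eq (d : ℕ) (x : Pt d) :
    Tlin d (upsStar d) x = ∫⁻ s, ENNReal.ofReal
      ((max 1 (max ‖s‖ ‖x.2 - ‖x.1‖ ^ 2 + ⟪(-2 : ℝ) • x.1, s⟫‖) ^ d)⁻¹) := by
  rw [Tlin, ← lintegral_add_right_eq_self _ x.1]
  refine lintegral_congr fun s ↦ ?_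
  have hs : x.2 - ‖s + x.1‖ ^ 2 + ‖-s‖ ^ 2 = x.2 - ‖x.1‖ ^ 2 + ⟪(-2 : ℝ) • x.1, s⟫ := by
    rw [norm_add_sq_real, norm_neg, real_inner_smul_left, real_inner_comm]
    ring
  rw [upsStar, sub_add_cancel_right, hs, ← Real.norm_eq_abs,
    max_one_max_pow (norm_nonneg _) (norm_nonneg _), norm_neg]

/-- For `d ≥ 2` there is a finite constant `C_d` with `T(υ_*) ≤ C_d · υ^{1/d}` pointwise. -/
theorem Tlin_upsStar_le (d : ℕ) (hd : 2 ≤ d) :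
    ∃ C : ENNReal, C < ⊤ ∧ ∀ x : Pt d,
      Tlin d (upsStar d) x ≤ C * (ups d x) ^ ((1 : ℝ) / d) := by
  obtain ⟨m, rfl⟩ : ∃ m, d = m + 2 := ⟨d - 2, by omega⟩
  obtain ⟨C, hC, hcore⟩ := exists_lintegral_inv_max_norm_inner_pow_le (le_refl (m + 2))
  refine ⟨C, hC, fun x ↦ ?_⟩
  rw [Tlin_upsStar_eq, ups_rpow_one_div (by omega)]
  refine (hcore _ _).trans ?_
  have hx : ‖x.1‖ ≤ ‖(-2 : ℝ) • x.1‖ := by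
    rw [norm_smul]; norm_num; linarith [norm_nonneg x.1]
  gcongr
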